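/- Let X be a set, let φ : X → ℂ, identified with the function on finite configurations equal to φ(x) on singletons {x} and to 0 on every configuration of cardinality ≠ 1, and let G : Finset X → ℂ. Then for every finite configuration γ (a Finset X), the K-transform intertwines ⋆-convolution by φ with multiplication by ⟨φ, γ⟩ := Σ_{x ∈ γ} φ(x): K(φ ⋆ G)(γ) = (Σ_{x ∈ γ} φ(x)) · (KG)(γ). -/

import Mathlib

open Finset

noncomputable def starConv {X : Type*} [DecidableEq X] (G₁ G₂ : Finset X → ℂ)
    (η : Finset X) : ℂ :=
  ∑ p ∈ (η.powerset ×ˢ η.powerset ×ˢ η.powerset).filter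
      (fun p => Disjoint p.1 p.2.1 ∧ Disjoint p.1 p.2.2 ∧ Disjoint p.2.1 p.2.2 ∧
        p.1 ∪ p.2.1 ∪ p.2.2 = η),
    G₁ (p.1 ∪ p.2.1) * G₂ (p.2.1 ∪ p.2.2)

noncomputable def liftFun {X : Type*} (φ : X → ℂ) : Finset X → ℂ :=
  fun η => if η.card = 1 then ∑ x ∈ η, φ x else 0

noncomputable def Ktransform {X : Type*} [DecidableEq X] (G : Finset X → ℂ)
    (γ : Finset X) : ℂ :=
  ∑ η ∈ γ.powerset, G η

lemma starConv_lift {X : Type*} [DecidableEq X] (φ : X → ℂ) (G : Finset X → ℂ)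
    (η : Finset X) :
    starConv (liftFun φ) G η = ∑ x ∈ η, φ x * (G (η.erase x) + G η) := by
  classical
  set F : Finset X × Finset X × Finset X → ℂ :=
    fun p => liftFun φ (p.1 ∪ p.2.1) * G (p.2.1 ∪ p.2.2) with hF
  set i1 : X → Finset X × Finset X × Finset X := fun x => ({x}, ∅, η.erase x) with hi1
  set i2 : X → Finset X × Finset X × Finset X := fun x => (∅, {x}, η.erase x) with hi2
  set T := (η.powerset ×ˢ η.powerset ×ˢ η.powerset).filter
      (fun p => Disjoint p.1 p.2.1 ∧ Disjoint p.1 p.2.2 ∧ Disjoint p.2.1 p.2.2 ∧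
        p.1 ∪ p.2.1 ∪ p.2.2 = η) with hT
  have hsub : η.image i1 ∪ η.image i2 ⊆ T := by
    intro p hp
    simp only [mem_union, mem_image] at hp
    rcases hp with ⟨x, hx, rfl⟩ | ⟨x, hx, rfl⟩ <;>
    · simp only [hT, mem_filter, mem_product, mem_powerset, hi1, hi2]
      refine ⟨⟨?_, ?_, ?_⟩, ?_, ?_, ?_, ?_⟩ <;>
        simp [singleton_subset_iff, hx, erase_subset, disjoint_singleton_left,
          disjoint_singleton_right, ← Finset.insert_eq, insert_erase hx]
  have key : starConv (liftFun φ) G η = ∑ p ∈ η.image i1 ∪ η.image i2, F p := by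
    rw [starConv, ← hT]
    refine (Finset.sum_subset hsub ?_).symm
    intro p hpT hpS
    simp only [hT, mem_filter, mem_product, mem_powerset] at hpT
    obtain ⟨⟨h1, h2, h3⟩, hd12, hd13, hd23, huni⟩ := hpT
    by_cases hc : (p.1 ∪ p.2.1).card = 1
    · exfalso
      apply hpS
      rw [card_union_of_disjoint hd12] at hc
      simp only [mem_union, mem_image]
      rcases Nat.eq_zero_or_pos p.1.card with h0 | hpos
      · rw [card_eq_zero] at h0
        rw [h0, card_empty, Nat.zero_add, card_eq_one] at hc
        obtain ⟨x, hx⟩ := hc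
        have hx3 : x ∉ p.2.2 := by rw [hx] at hd23; simpa using hd23
        refine Or.inr ⟨x, ?_, ?_⟩
        · rw [← huni, h0, hx]; simp
        · have he : η.erase x = p.2.2 := by
            rw [← huni, h0, hx]
            simp [← Finset.insert_eq, Finset.erase_insert hx3]
          simp [hi2, Prod.ext_iff, h0, hx, he]
      · have h0 : p.2.1 = ∅ := by rw [← card_eq_zero]; omega
        have h1c : p.1.card = 1 := by rw [h0, card_empty] at hc; omega
        rw [card_eq_one] at h1c
        obtain ⟨x, hx⟩ := h1c
        have hx3 : x ∉ p.2.2 := by rw [hx] at hd13; simpa using hd13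
        refine Or.inl ⟨x, ?_, ?_⟩
        · rw [← huni, h0, hx]; simp
        · have he : η.erase x = p.2.2 := by
            rw [← huni, h0, hx]
            simp [← Finset.insert_eq, Finset.erase_insert hx3]
          simp [hi1, Prod.ext_iff, h0, hx, he]
    · simp [hF, liftFun, hc]
  rw [key]
  have hdisj : Disjoint (η.image i1) (η.image i2) := by
    rw [disjoint_left]
    rintro p hp1 hp2
    simp only [mem_image, hi1, hi2] at hp1 hp2
    obtain ⟨x, _, rfl⟩ := hp1
    obtain ⟨y, _, h⟩ := hp2
    simp only [Prod.ext_iff] at h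
    exact (singleton_ne_empty x) h.1.symm
  rw [Finset.sum_union hdisj,
    Finset.sum_image (by intro a _ b _ h; simpa [hi1] using congrArg (fun p => p.1) h),
    Finset.sum_image (by intro a _ b _ h; simpa [hi2] using congrArg (fun p => p.2.1) h)]
  rw [← Finset.sum_add_distrib]
  refine Finset.sum_congr rfl fun x hx => ?_
  simp [hF, hi1, hi2, liftFun, mul_add, ← Finset.insert_eq, insert_erase hx]

theorem Ktransform_starConv_one_particle {X : Type*} [DecidableEq X]
    (φ : X → ℂ) (G : Finset X → ℂ) (γ : Finset X) :
    Ktransform (starConv (liftFun φ) G) γ = (∑ x ∈ γ, φ x) * Ktransform G γ := by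
  classical
  simp only [Ktransform, starConv_lift, mul_add]
  rw [Finset.sum_mul]
  simp only [Finset.mul_sum]
  rw [Finset.sum_comm]
  simp only [Finset.sum_add_distrib]
  have key2 : ∑ η ∈ γ.powerset, ∑ x ∈ η, φ x * G (η.erase x)
      = ∑ η ∈ γ.powerset, ∑ x ∈ γ \ η, φ x * G η := by
    rw [Finset.sum_sigma', Finset.sum_sigma']
    refine Finset.sum_nbij' (fun p => ⟨p.1.erase p.2, p.2⟩)
      (fun p => ⟨insert p.2 p.1, p.2⟩) ?_ ?_ ?_ ?_ ?_
    · rintro ⟨η, x⟩ hp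
      simp only [mem_sigma, mem_powerset, mem_sdiff] at hp ⊢
      exact ⟨(erase_subset _ _).trans hp.1, hp.1 hp.2, notMem_erase _ _⟩
    · rintro ⟨η, x⟩ hp
      simp only [mem_sigma, mem_powerset, mem_sdiff] at hp ⊢
      exact ⟨insert_subset hp.2.1 hp.1, mem_insert_self _ _⟩
    · rintro ⟨η, x⟩ hp
      simp only [mem_sigma, mem_powerset] at hp
      simp [insert_erase hp.2]
    · rintro ⟨η, x⟩ hp
      simp only [mem_sigma, mem_powerset, mem_sdiff] at hp
      simp [erase_insert hp.2.2]
    · rintro ⟨η, x⟩ _; rfl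
  rw [key2, ← Finset.sum_add_distrib]
  refine Finset.sum_congr rfl fun η hη => ?_
  rw [mem_powerset] at hη
  rw [add_comm, ← Finset.sum_sdiff hη, add_comm]
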